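/- Let F(x,y) = Re ∫₀^x √(((u−x)² + y²)(u−1)/u) du and G(x,y) = −∫₀¹ y²·√(1−t²)·Im √(1 − 1/(x + i t y)) dt, with √ the principal branch of the complex square root. For each fixed y > 0, the function x ↦ F(x,y) + G(x,y) is strictly increasing on (1, ∞). Consequently, for each y > 0 there is at most one x ∈ (1, ∞) with F(x,y) + G(x,y) = 0; i.e. the set Σ⁺ = { x + i y : y > 0, F(x,y) + G(x,y) = 0 } meets each horizontal line {Im z = y} ∩ {Re z > 1} in at most one point. -/

import Mathlib

open Complex

/-- `F(x,y) = Re ∫₀^x √(((u-x)² + y²)(u-1)/u) du`, principal complex square root. -/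
noncomputable def Ffun (x y : ℝ) : ℝ :=
  (∫ u in (0 : ℝ)..x,
    ((((u : ℂ) - (x : ℂ)) ^ 2 + (y : ℂ) ^ 2) * ((u : ℂ) - 1) / (u : ℂ)) ^ (1/2 : ℂ)).re

/-- `G(x,y) = -∫₀¹ y²√(1-t²)·Im √(1 - 1/(x+ity)) dt`. -/
noncomputable def Gfun (x y : ℝ) : ℝ :=
  -∫ t in (0 : ℝ)..1, y ^ 2 * Real.sqrt (1 - t ^ 2) *
    (((1 : ℂ) - 1 / ((x : ℂ) + (t : ℂ) * (y : ℂ) * Complex.I)) ^ (1/2 : ℂ)).im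

/-- The upper half-plane branch set `Σ⁺ = { x + iy : y > 0, F(x,y) + G(x,y) = 0 }`. -/
def SigmaPlus : Set ℂ := {z : ℂ | 0 < z.im ∧ Ffun z.re z.im + Gfun z.re z.im = 0}


open intervalIntegral

lemma sqrt_re_eq (w : ℂ) : (w ^ (1/2:ℂ)).re = Real.sqrt ((‖w‖ + w.re)/2) := by
  rcases eq_or_ne w 0 with rfl|hw
  · simp [Complex.zero_cpow (by norm_num : (1/2:ℂ) ≠ 0)]
  · rw [Complex.cpow_def_of_ne_zero hw, Complex.exp_re]
    have h1 : (Complex.log w * (1/2:ℂ)).re = Real.log (‖w‖) / 2 := by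
      simp [Complex.mul_re, Complex.log_re]; ring
    have h2 : (Complex.log w * (1/2:ℂ)).im = Complex.arg w / 2 := by
      simp [Complex.mul_im, Complex.log_im]; ring
    rw [h1, h2, Real.cos_half (Complex.neg_pi_lt_arg w).le (Complex.arg_le_pi w)]
    have h3 : Real.exp (Real.log (‖w‖) / 2) = Real.sqrt (‖w‖) := by
      rw [← Real.log_sqrt (norm_nonneg w),
        Real.exp_log (Real.sqrt_pos.2 (norm_pos_iff.mpr hw))]
    rw [h3, ← Real.sqrt_mul (norm_nonneg w)]
    congr 1
    have := Complex.norm_mul_cos_arg w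
    field_simp
    linarith [this]

lemma sqrt_im_eq (w : ℂ) (h : 0 ≤ w.im) :
    (w ^ (1/2:ℂ)).im = Real.sqrt ((‖w‖ - w.re)/2) := by
  rcases eq_or_ne w 0 with rfl|hw
  · simp [Complex.zero_cpow (by norm_num : (1/2:ℂ) ≠ 0)]
  · rw [Complex.cpow_def_of_ne_zero hw, Complex.exp_im]
    have h1 : (Complex.log w * (1/2:ℂ)).re = Real.log (‖w‖) / 2 := by
      simp [Complex.mul_re, Complex.log_re]; ring
    have h2 : (Complex.log w * (1/2:ℂ)).im = Complex.arg w / 2 := by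
      simp [Complex.mul_im, Complex.log_im]; ring
    rw [h1, h2, Real.sin_half_eq_sqrt (Complex.arg_nonneg_iff.2 h)
      (by linarith [Complex.arg_le_pi w, Real.pi_pos])]
    have h3 : Real.exp (Real.log (‖w‖) / 2) = Real.sqrt (‖w‖) := by
      rw [← Real.log_sqrt (norm_nonneg w),
        Real.exp_log (Real.sqrt_pos.2 (norm_pos_iff.mpr hw))]
    rw [h3, ← Real.sqrt_mul (norm_nonneg w)]
    congr 1
    have := Complex.norm_mul_cos_arg w
    field_simp
    linarith [this]

lemma ofReal_sqrt_eq (r : ℝ) : ((r:ℂ)) ^ (1/2:ℂ) =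
    (Real.sqrt ((|r|+r)/2) : ℂ) + (Real.sqrt ((|r|-r)/2) : ℂ) * Complex.I := by
  apply Complex.ext
  · rw [sqrt_re_eq]; simp
  · rw [sqrt_im_eq _ (by simp)]; simp

/-- real integrand components -/
noncomputable def Pf (x y u : ℝ) : ℝ := ((u-x)^2+y^2)*(u-1)/u
noncomputable def rF (x y u : ℝ) : ℝ := Real.sqrt ((|Pf x y u| + Pf x y u)/2)
noncomputable def iF (x y u : ℝ) : ℝ := Real.sqrt ((|Pf x y u| - Pf x y u)/2)

lemma cF_eq (x y u : ℝ) :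
    ((((u : ℂ) - (x : ℂ)) ^ 2 + (y : ℂ) ^ 2) * ((u : ℂ) - 1) / (u : ℂ)) ^ (1/2 : ℂ)
      = (rF x y u : ℂ) + (iF x y u : ℂ) * Complex.I := by
  have : (((u : ℂ) - (x : ℂ)) ^ 2 + (y : ℂ) ^ 2) * ((u : ℂ) - 1) / (u : ℂ)
      = ((Pf x y u : ℝ) : ℂ) := by unfold Pf; push_cast; ring
  rw [this, ofReal_sqrt_eq]; rfl

lemma measurable_Pf (x y : ℝ) : Measurable (Pf x y) := by
  unfold Pf; fun_prop

lemma intInt_cF {x y : ℝ} (hx : 1 < x) :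
    IntervalIntegrable (fun u : ℝ =>
      ((((u : ℂ) - (x : ℂ)) ^ 2 + (y : ℂ) ^ 2) * ((u : ℂ) - 1) / (u : ℂ)) ^ (1/2 : ℂ))
      MeasureTheory.volume 0 x := by
  set K : ℝ := (x^2+y^2)*(x+1) with hK
  have hK0 : 0 ≤ K := by positivity
  have hg : IntervalIntegrable (fun u : ℝ => (2*Real.sqrt K) * u ^ (-(1/2) : ℝ))
      MeasureTheory.volume 0 x :=
    (intervalIntegrable_rpow' (by norm_num)).const_mul _
  refine hg.mono_fun ?_ ?_
  · apply Measurable.aestronglyMeasurable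
    have h1 : Measurable (rF x y) := ((measurable_Pf x y).abs.add (measurable_Pf x y)).div_const 2
      |>.sqrt
    have h2 : Measurable (iF x y) := ((measurable_Pf x y).abs.sub (measurable_Pf x y)).div_const 2
      |>.sqrt
    simp only [cF_eq]
    exact (Complex.measurable_ofReal.comp h1).add
      ((Complex.measurable_ofReal.comp h2).mul_const Complex.I)
  · rw [Set.uIoc_of_le (by linarith : (0:ℝ) ≤ x), Filter.EventuallyLE, MeasureTheory.ae_restrict_iff' measurableSet_Ioc]
    filter_upwards with u hu
    obtain ⟨hu0, hux⟩ := hu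
    have hPle : |Pf x y u| ≤ K / u := by
      unfold Pf
      rw [abs_div, abs_of_pos hu0, div_le_div_iff_of_pos_right hu0, abs_mul]
      have h1 : |(u-x)^2 + y^2| ≤ x^2 + y^2 := by
        rw [_root_.abs_of_nonneg (by positivity : (0:ℝ) ≤ (u-x)^2 + y^2)]
        nlinarith
      have h2 : |u - 1| ≤ x + 1 := by
        rw [abs_le]; constructor <;> nlinarith
      calc |(u-x)^2+y^2| * |u-1| ≤ (x^2+y^2) * (x+1) :=
            mul_le_mul h1 h2 (abs_nonneg _) (by positivity)
        _ = K := rfl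
    have hsq : Real.sqrt |Pf x y u| ≤ Real.sqrt K * u ^ (-(1/2) : ℝ) := by
      have : Real.sqrt |Pf x y u| ≤ Real.sqrt (K / u) := Real.sqrt_le_sqrt hPle
      rw [div_eq_mul_inv, Real.sqrt_mul hK0, Real.sqrt_inv] at this
      rwa [Real.rpow_neg hu0.le, ← Real.sqrt_eq_rpow]
    rw [cF_eq]
    calc ‖(rF x y u : ℂ) + (iF x y u : ℂ) * Complex.I‖
        ≤ ‖(rF x y u : ℂ)‖ + ‖(iF x y u : ℂ) * Complex.I‖ := norm_add_le _ _
      _ = rF x y u + iF x y u := by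
          rw [Complex.norm_real, norm_mul, Complex.norm_I, mul_one, Complex.norm_real,
            Real.norm_eq_abs, Real.norm_eq_abs]
          unfold rF iF
          rw [_root_.abs_of_nonneg (Real.sqrt_nonneg _), _root_.abs_of_nonneg (Real.sqrt_nonneg _)]
      _ ≤ Real.sqrt |Pf x y u| + Real.sqrt |Pf x y u| := by
          gcongr <;> [skip; skip] <;>
            exact Real.sqrt_le_sqrt (by cases abs_cases (Pf x y u) <;> linarith)
      _ = 2 * Real.sqrt |Pf x y u| := by ring
      _ ≤ 2 * (Real.sqrt K * u ^ (-(1/2) : ℝ)) := by linarith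
      _ ≤ ‖2 * Real.sqrt K * u ^ (-(1/2) : ℝ)‖ := by rw [mul_assoc]; exact le_abs_self _

lemma rF_intInt {x y : ℝ} (hx : 1 < x) :
    IntervalIntegrable (rF x y) MeasureTheory.volume 0 x := by
  have hi := intInt_cF (y := y) hx
  have h1 := hi.1.re
  have h2 := hi.2.re
  simp only [cF_eq, RCLike.re_to_complex, Complex.add_re, Complex.ofReal_re, Complex.mul_re,
    Complex.I_re, Complex.I_im, Complex.ofReal_im, mul_zero, zero_mul, mul_one, sub_zero,
    zero_sub, add_zero, neg_zero] at h1 h2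
  exact ⟨h1, h2⟩

lemma Ffun_eq {x y : ℝ} (hx : 1 < x) : Ffun x y = ∫ u in (0:ℝ)..x, rF x y u := by
  have hi := intInt_cF (y := y) hx
  unfold Ffun
  rw [integral_of_le (by linarith : (0:ℝ) ≤ x), integral_of_le (by linarith : (0:ℝ) ≤ x)]
  rw [← RCLike.re_to_complex, ← _root_.integral_re hi.1]
  refine MeasureTheory.integral_congr_ae (Filter.Eventually.of_forall fun u => ?_)
  simp only [cF_eq, RCLike.re_to_complex]
  simp

lemma rF_mono {y x₁ x₂ : ℝ} (h1 : 1 < x₁) (h12 : x₁ ≤ x₂) {u : ℝ}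
    (hu0 : 0 ≤ u) (hu : u ≤ x₁) : rF x₁ y u ≤ rF x₂ y u := by
  unfold rF Pf
  apply Real.sqrt_le_sqrt
  have main : |((u-x₁)^2+y^2)*(u-1)/u| + ((u-x₁)^2+y^2)*(u-1)/u
      ≤ |((u-x₂)^2+y^2)*(u-1)/u| + ((u-x₂)^2+y^2)*(u-1)/u := by
    rcases eq_or_lt_of_le hu0 with h|h
    · subst h; simp
    rcases le_or_gt u 1 with hle|hgt
    · have p1 : ((u-x₁)^2+y^2)*(u-1)/u ≤ 0 :=
        div_nonpos_of_nonpos_of_nonneg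
          (mul_nonpos_of_nonneg_of_nonpos (by positivity) (by linarith)) h.le
      have p2 : ((u-x₂)^2+y^2)*(u-1)/u ≤ 0 :=
        div_nonpos_of_nonpos_of_nonneg
          (mul_nonpos_of_nonneg_of_nonpos (by positivity) (by linarith)) h.le
      rw [_root_.abs_of_nonpos p1, _root_.abs_of_nonpos p2]; linarith
    · have key : ((u-x₁)^2+y^2)*(u-1)/u ≤ ((u-x₂)^2+y^2)*(u-1)/u := by
        rw [div_le_div_iff_of_pos_right h]
        nlinarith [mul_nonneg (mul_nonneg (sub_nonneg.2 h12)
          (by linarith : (0:ℝ) ≤ x₁ + x₂ - 2*u)) (by linarith : (0:ℝ) ≤ u - 1)]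
      have p1 : 0 ≤ ((u-x₁)^2+y^2)*(u-1)/u :=
        div_nonneg (mul_nonneg (by positivity) (by linarith)) (by linarith)
      rw [_root_.abs_of_nonneg p1, _root_.abs_of_nonneg (p1.trans key)]; linarith
  linarith

lemma Ffun_lt {y : ℝ} (hy : 0 < y) {x₁ x₂ : ℝ} (h1 : 1 < x₁) (h12 : x₁ < x₂) :
    Ffun x₁ y < Ffun x₂ y := by
  have hx2 : 1 < x₂ := h1.trans h12
  have hi1 : IntervalIntegrable (rF x₁ y) MeasureTheory.volume 0 x₁ := rF_intInt h1
  have hi2 : IntervalIntegrable (rF x₂ y) MeasureTheory.volume 0 x₂ := rF_intInt hx2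
  have hi2a : IntervalIntegrable (rF x₂ y) MeasureTheory.volume 0 x₁ :=
    hi2.mono_set' (by
      rw [Set.uIoc_of_le (by linarith : (0:ℝ) ≤ x₁), Set.uIoc_of_le (by linarith : (0:ℝ) ≤ x₂)]
      exact Set.Ioc_subset_Ioc le_rfl h12.le)
  have hi2b : IntervalIntegrable (rF x₂ y) MeasureTheory.volume x₁ x₂ :=
    hi2.mono_set' (by
      rw [Set.uIoc_of_le h12.le, Set.uIoc_of_le (by linarith : (0:ℝ) ≤ x₂)]
      exact Set.Ioc_subset_Ioc (by linarith) le_rfl)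
  rw [Ffun_eq h1, Ffun_eq hx2,
    ← integral_add_adjacent_intervals hi2a hi2b]
  have hmono : ∫ u in (0:ℝ)..x₁, rF x₁ y u ≤ ∫ u in (0:ℝ)..x₁, rF x₂ y u :=
    integral_mono_on (by linarith) hi1 hi2a fun u hu => rF_mono h1 h12.le hu.1 hu.2
  have hpos : 0 < ∫ u in x₁..x₂, rF x₂ y u := by
    apply intervalIntegral_pos_of_pos_on hi2b ?_ h12
    intro u hu
    have hP : 0 < Pf x₂ y u := by
      unfold Pf
      have h0 : (0:ℝ) < (u - x₂)^2 + y^2 := by nlinarith [sq_nonneg (u - x₂), mul_pos hy hy]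
      exact div_pos (mul_pos h0 (by linarith [hu.1])) (by linarith [hu.1])
    unfold rF
    apply Real.sqrt_pos.2
    rw [_root_.abs_of_nonneg hP.le]
    linarith
  linarith

/-- the algebraic identity -/
lemma term_eq {s x : ℝ} (h1 : 1 ≤ x) :
    Real.sqrt ((x-1)^2+s^2) / Real.sqrt (x^2+s^2) - (1 - x/(x^2+s^2))
      = s^2 / ((x^2+s^2) * (Real.sqrt (((x-1)^2+s^2)*(x^2+s^2)) + (x^2-x+s^2))) := by
  have hb : (0:ℝ) < x^2+s^2 := by nlinarith [sq_nonneg s]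
  have hc : (0:ℝ) ≤ x^2-x+s^2 := by nlinarith [sq_nonneg s]
  have ha : (0:ℝ) ≤ (x-1)^2+s^2 := by positivity
  have hid : ((x-1)^2+s^2)*(x^2+s^2) = (x^2-x+s^2)^2 + s^2 := by ring
  set R := Real.sqrt (((x-1)^2+s^2)*(x^2+s^2)) with hR
  have hR0 : 0 ≤ R := Real.sqrt_nonneg _
  have hR2 : R^2 = ((x-1)^2+s^2)*(x^2+s^2) := Real.sq_sqrt (by positivity)
  have hsb : Real.sqrt (x^2+s^2) ≠ 0 := by positivity
  have hL : Real.sqrt ((x-1)^2+s^2) / Real.sqrt (x^2+s^2) = R / (x^2+s^2) := by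
    rw [div_eq_div_iff hsb hb.ne', hR, Real.sqrt_mul ha, mul_assoc,
      Real.mul_self_sqrt hb.le]
  have hRe : (1 : ℝ) - x/(x^2+s^2) = (x^2-x+s^2)/(x^2+s^2) := by field_simp; ring
  rw [hL, hRe]
  rcases eq_or_lt_of_le (add_nonneg hR0 hc) with h0|hpos
  · -- R + c = 0 : then R = 0 and c = 0 and s = 0
    have hRz : R = 0 := by linarith [hR0, hc]
    have hcz : x^2-x+s^2 = 0 := by linarith [hR0, hc]
    have hsz : s = 0 := by nlinarith [hR2]
    rw [hRz, hcz, hsz]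
    simp
  · rw [div_sub_div_same, div_eq_div_iff hb.ne' (by positivity : ((x^2+s^2) * (R + (x^2-x+s^2))) ≠ 0)]
    have key : (R - (x^2-x+s^2)) * (R + (x^2-x+s^2)) = s^2 := by nlinarith [hR2]
    nlinarith [key]

lemma key_mono {s x₁ x₂ : ℝ} (hs : 0 ≤ s) (h1 : 1 ≤ x₁) (h12 : x₁ ≤ x₂) :
    Real.sqrt ((x₂-1)^2+s^2) / Real.sqrt (x₂^2+s^2) - (1 - x₂/(x₂^2+s^2))
      ≤ Real.sqrt ((x₁-1)^2+s^2) / Real.sqrt (x₁^2+s^2) - (1 - x₁/(x₁^2+s^2)) := by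
  rw [term_eq h1, term_eq (h1.trans h12)]
  rcases eq_or_lt_of_le hs with rfl|hs'
  · simp
  · have hb1 : (0:ℝ) < x₁^2+s^2 := by positivity
    have hR1 : (0:ℝ) < Real.sqrt (((x₁-1)^2+s^2)*(x₁^2+s^2)) :=
      Real.sqrt_pos.2 (by nlinarith [sq_nonneg (x₁-1)])
    have hc1 : (0:ℝ) ≤ x₁^2-x₁+s^2 := by nlinarith
    have hd1 : (0:ℝ) < (x₁^2+s^2) * (Real.sqrt (((x₁-1)^2+s^2)*(x₁^2+s^2)) + (x₁^2-x₁+s^2)) :=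
      mul_pos hb1 (by linarith)
    have hd2 : (x₁^2+s^2) * (Real.sqrt (((x₁-1)^2+s^2)*(x₁^2+s^2)) + (x₁^2-x₁+s^2))
        ≤ (x₂^2+s^2) * (Real.sqrt (((x₂-1)^2+s^2)*(x₂^2+s^2)) + (x₂^2-x₂+s^2)) := by
      have hRle : Real.sqrt (((x₁-1)^2+s^2)*(x₁^2+s^2)) ≤ Real.sqrt (((x₂-1)^2+s^2)*(x₂^2+s^2)) :=
        Real.sqrt_le_sqrt (mul_le_mul (by nlinarith) (by nlinarith) (by positivity) (by positivity))
      apply mul_le_mul (by nlinarith) (add_le_add hRle (by nlinarith)) (by linarith) (by nlinarith)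
    exact div_le_div_of_nonneg_left (sq_nonneg s) hd1 hd2

noncomputable def wG (x y t : ℝ) : ℂ := 1 - 1/((x:ℂ) + (t:ℂ)*(y:ℂ)*Complex.I)

noncomputable def gR (x y t : ℝ) : ℝ :=
  y^2 * Real.sqrt (1-t^2) * Real.sqrt ((‖wG x y t‖ - (wG x y t).re)/2)

lemma zeta_ne {x y t : ℝ} (hx : 0 < x) : ((x:ℂ) + (t:ℂ)*(y:ℂ)*Complex.I) ≠ 0 := by
  intro h
  have := congrArg Complex.re h
  simp at this
  exact hx.ne' this

lemma zeta_normSq (x y t : ℝ) :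
    Complex.normSq ((x:ℂ) + (t:ℂ)*(y:ℂ)*Complex.I) = x^2+(t*y)^2 := by
  simp [Complex.normSq_apply]
  ring

lemma wG_re {x y t : ℝ} : (wG x y t).re = 1 - x/(x^2+(t*y)^2) := by
  unfold wG
  rw [one_div, Complex.sub_re, Complex.inv_re, zeta_normSq]
  simp

lemma wG_im {x y t : ℝ} : (wG x y t).im = t*y/(x^2+(t*y)^2) := by
  unfold wG
  rw [one_div, Complex.sub_im, Complex.inv_im, zeta_normSq]
  simp [neg_div]

lemma wG_abs {x y t : ℝ} (hx : 0 < x) :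
    ‖wG x y t‖ = Real.sqrt ((x-1)^2+(t*y)^2) / Real.sqrt (x^2+(t*y)^2) := by
  have hζ := zeta_ne (y := y) (t := t) hx
  have hw : wG x y t = (((x:ℂ) + (t:ℂ)*(y:ℂ)*Complex.I) - 1)/((x:ℂ) + (t:ℂ)*(y:ℂ)*Complex.I) := by
    unfold wG; field_simp
  rw [hw, norm_div]
  congr 1
  · rw [Complex.norm_def, Complex.normSq_apply]
    simp
    congr 1
    ring
  · rw [Complex.norm_def, zeta_normSq]

lemma gR_cont {x y : ℝ} (hx : 0 < x) : Continuous (gR x y) := by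
  have hζc : Continuous (fun t : ℝ => (x:ℂ) + (t:ℂ)*(y:ℂ)*Complex.I) := by continuity
  have hwc : Continuous (fun t => wG x y t) :=
    continuous_const.sub (continuous_const.div hζc fun t => zeta_ne hx)
  apply Continuous.mul (by continuity)
  exact Real.continuous_sqrt.comp
    (((continuous_norm.comp hwc).sub (Complex.continuous_re.comp hwc)).div_const 2)

lemma Gfun_eq {x y : ℝ} (hx : 0 < x) (hy : 0 ≤ y) :
    Gfun x y = -∫ t in (0:ℝ)..1, gR x y t := by
  unfold Gfun
  congr 1
  apply integral_congr
  intro t ht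
  rw [Set.uIcc_of_le (by norm_num : (0:ℝ) ≤ 1)] at ht
  have him : 0 ≤ (wG x y t).im := by
    rw [wG_im]
    apply div_nonneg (mul_nonneg ht.1 hy) (by positivity)
  show y^2 * Real.sqrt (1-t^2) * ((wG x y t) ^ (1/2:ℂ)).im = gR x y t
  rw [sqrt_im_eq _ him]
  rfl

lemma Gfun_le {y : ℝ} (hy : 0 < y) {x₁ x₂ : ℝ} (h1 : 1 < x₁) (h12 : x₁ ≤ x₂) :
    Gfun x₁ y ≤ Gfun x₂ y := by
  have hx2 : (1:ℝ) < x₂ := h1.trans_le h12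
  rw [Gfun_eq (by linarith) hy.le, Gfun_eq (by linarith) hy.le]
  apply neg_le_neg
  apply integral_mono_on (by norm_num) ((gR_cont (by linarith : (0:ℝ) < x₂)).intervalIntegrable _ _)
    ((gR_cont (by linarith : (0:ℝ) < x₁)).intervalIntegrable _ _)
  intro t ht
  unfold gR
  apply mul_le_mul_of_nonneg_left ?_ (by positivity)
  apply Real.sqrt_le_sqrt
  rw [wG_abs (by linarith : (0:ℝ) < x₂), wG_abs (by linarith : (0:ℝ) < x₁), wG_re, wG_re]
  have := key_mono (mul_nonneg ht.1 hy.le) h1.le h12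
  linarith

/-- For each fixed `y > 0`, `x ↦ F(x,y) + G(x,y)` is strictly increasing on `(1,∞)`;
consequently `Σ⁺` meets each horizontal line `{Im z = y} ∩ {Re z > 1}` in at most one
point. -/
theorem stmt_12 (y : ℝ) (hy : 0 < y) :
    StrictMonoOn (fun x : ℝ => Ffun x y + Gfun x y) (Set.Ioi 1)
    ∧ (∀ z₁ ∈ SigmaPlus, ∀ z₂ ∈ SigmaPlus,
        z₁.im = y → z₂.im = y → 1 < z₁.re → 1 < z₂.re → z₁ = z₂) := by
  have hmono : StrictMonoOn (fun x : ℝ => Ffun x y + Gfun x y) (Set.Ioi 1) := by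
    intro a ha b hb hab
    have hF := Ffun_lt hy ha hab
    have hG := Gfun_le hy ha hab.le
    simp only
    linarith
  refine ⟨hmono, ?_⟩
  intro z₁ hz₁ z₂ hz₂ h1 h2 hr1 hr2
  obtain ⟨him1, hs1⟩ := hz₁
  obtain ⟨him2, hs2⟩ := hz₂
  rw [h1] at hs1
  rw [h2] at hs2
  have hre : z₁.re = z₂.re :=
    hmono.injOn (Set.mem_Ioi.2 hr1) (Set.mem_Ioi.2 hr2) (by simpa using hs1.trans hs2.symm)
  exact Complex.ext hre (by rw [h1, h2])
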